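/- arXiv:1801.02359 — 2 statements merged into one kernel-verified Lean document; each statement's English description precedes it below -/
import Mathlib

section
/- For every natural number n ≥ 1 and reals a ≤ x, ∫_a^x e^{−t²/2} H_n(t) dt = −2 ∑_{i=0}^{⌊(n−1)/2⌋} (2^i (n−1)!!/(n−1−2i)!!) [e^{−t²/2} H_{n−1−2i}(t)]_{t=a}^{t=x} + 𝟙{n even} · 2^{n/2} (n−1)!! ∫_a^x e^{−t²/2} dt. -/
/-! Differentiating `e^{-t²/2} H_m(t)` and using the three-term recurrence
`2t H_m = H_{m+1} + 2m H_{m-1}` gives `(e^{-t²/2} H_m)' = e^{-t²/2} (m H_{m-1} - H_{m+1}/2)`.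
Hence the integrals `I_k = ∫_a^x e^{-t²/2} H_k` satisfy
`I_{m+1} = 2m I_{m-1} - 2 [e^{-t²/2} H_m]_a^x`, and unrolling this two-step recurrence down to
`I_1` or `I_0 = ∫_a^x e^{-t²/2}` produces the double-factorial coefficients. -/

open Real MeasureTheory

/-- Physicists' Hermite polynomial `H n x = (-1)^n e^{x^2} (d/dx)^n e^{-x^2}`. -/
noncomputable def physHermite (n : ℕ) (x : ℝ) : ℝ :=
  (-1)^n * Real.exp (x^2) * iteratedDeriv n (fun y => Real.exp (-y^2)) x

/-- Hermite function `φ k x = (2^k k! √π)^{-1/2} H_k(x) e^{-x²/2}`. -/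
noncomputable def hermiteFn (k : ℕ) (x : ℝ) : ℝ :=
  (Real.sqrt (2^k * k.factorial * Real.sqrt Real.pi))⁻¹ * physHermite k x * Real.exp (-x^2/2)

/-- Confluent hypergeometric function `₁F₁(-k; b; x)` with nonpositive integer first
parameter `-k`; it is the polynomial `∑_{j=0}^{k} ((-k)_j/(b)_j) x^j/j!`, where the rising
factorial `(-k)_j = (-1)^j k!/(k-j)!`. -/
noncomputable def oneF1neg (k : ℕ) (b x : ℝ) : ℝ :=
  ∑ j ∈ Finset.range (k+1),
    ((-1)^j * (k.descFactorial j : ℝ) / ∏ i ∈ Finset.range j, (b + i)) * x^j / (j.factorial : ℝ)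

/-- GUE mean density at σ² = 1/2: partial sum of squared Hermite functions. -/
noncomputable def pGUE (n : ℕ) (x : ℝ) : ℝ := ∑ k ∈ Finset.range n, hermiteFn k x ^ 2

/-- GUE mean density with general variance σ². -/
noncomputable def pGUEvar (n : ℕ) (σ x : ℝ) : ℝ :=
  (σ * Real.sqrt 2)⁻¹ * pGUE n (x / (σ * Real.sqrt 2))

/-- The function τₙ from the GSE/GOE densities. -/
noncomputable def tauFn (n : ℕ) (x : ℝ) : ℝ :=
  Real.sqrt (n/2) * hermiteFn (n-1) x *
    ((1/2) * ∫ t : ℝ, Real.sign (x - t) * hermiteFn n t)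

/-- The function αₙ (for odd n) from the GOE density. -/
noncomputable def alphaFn (n : ℕ) (x : ℝ) : ℝ :=
  hermiteFn (n-1) x / ∫ t : ℝ, hermiteFn (n-1) t

open Polynomial

noncomputable def physHermitePoly (R : Type*) [CommRing R] : ℕ → R[X]
  | 0 => 1
  | n + 1 => 2 * X * physHermitePoly R n - derivative (physHermitePoly R n)

section Poly

variable (R : Type*) [CommRing R]

@[simp]
theorem physHermitePoly_zero : physHermitePoly R 0 = 1 := rfl

theorem physHermitePoly_succ (n : ℕ) :
    physHermitePoly R (n + 1) = 2 * X * physHermitePoly R n - derivative (physHermitePoly R n) :=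
  rfl

theorem derivative_physHermitePoly (n : ℕ) :
    derivative (physHermitePoly R n) = 2 * n * physHermitePoly R (n - 1) := by
  induction n with
  | zero => simp
  | succ n ih =>
    rw [physHermitePoly_succ, derivative_sub, derivative_mul, ih, derivative_mul]
    cases n with
    | zero => simp
    | succ k =>
      rw [Nat.add_sub_cancel, Nat.add_sub_cancel, physHermitePoly_succ R k]
      simp only [derivative_mul, derivative_ofNat, derivative_natCast, derivative_X]
      push_cast
      ring

end Poly

theorem iteratedDeriv_exp_neg_sq (n : ℕ) :
    iteratedDeriv n (fun y => Real.exp (-y ^ 2))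
      = fun x => (-1) ^ n * Real.exp (-x ^ 2) * (physHermitePoly ℝ n).eval x := by
  induction n with
  | zero => funext x; simp
  | succ n ih =>
    funext x
    have hexp :
        HasDerivAt (fun y : ℝ => Real.exp (-y ^ 2)) (Real.exp (-x ^ 2) * -(2 * x)) x := by
      simpa using ((hasDerivAt_pow 2 x).neg).exp
    have hprod :=
      (hexp.const_mul ((-1 : ℝ) ^ n)).fun_mul ((physHermitePoly ℝ n).hasDerivAt x)
    rw [iteratedDeriv_succ, ih, hprod.deriv, physHermitePoly_succ]
    simp only [eval_sub, eval_mul, eval_ofNat, eval_X]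
    ring

theorem physHermite_eq_eval (n : ℕ) (x : ℝ) :
    physHermite n x = (physHermitePoly ℝ n).eval x := by
  have hsign : ((-1 : ℝ) ^ n) ^ 2 = 1 := by rw [← pow_mul, pow_mul', neg_one_sq, one_pow]
  have hexp : Real.exp (x ^ 2) * Real.exp (-x ^ 2) = 1 := by rw [← Real.exp_add]; simp
  rw [physHermite, iteratedDeriv_exp_neg_sq]
  linear_combination ((physHermitePoly ℝ n).eval x * Real.exp (x ^ 2) * Real.exp (-x ^ 2)) * hsign
    + (physHermitePoly ℝ n).eval x * hexp

@[fun_prop]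
theorem continuous_physHermite (n : ℕ) : Continuous (physHermite n) := by
  simpa only [funext (physHermite_eq_eval n)] using (physHermitePoly ℝ n).continuous

theorem hasDerivAt_physHermite (n : ℕ) (x : ℝ) :
    HasDerivAt (physHermite n) (2 * n * physHermite (n - 1) x) x := by
  simpa [funext (physHermite_eq_eval _), derivative_physHermitePoly] using
    (physHermitePoly ℝ n).hasDerivAt x

theorem physHermite_succ (n : ℕ) (x : ℝ) :
    physHermite (n + 1) x = 2 * x * physHermite n x - 2 * n * physHermite (n - 1) x := by
  simp [physHermite_eq_eval, physHermitePoly_succ, derivative_physHermitePoly]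

@[simp]
theorem physHermite_zero (x : ℝ) : physHermite 0 x = 1 := by
  simp [physHermite_eq_eval]

theorem hasDerivAt_exp_mul_physHermite (n : ℕ) (t : ℝ) :
    HasDerivAt (fun t => Real.exp (-t ^ 2 / 2) * physHermite n t)
      (Real.exp (-t ^ 2 / 2) * (n * physHermite (n - 1) t - physHermite (n + 1) t / 2)) t := by
  have hinner : HasDerivAt (fun t : ℝ => -t ^ 2 / 2) (-t) t :=
    ((hasDerivAt_pow 2 t).fun_neg.div_const 2).congr_deriv (by push_cast; ring)
  exact (hinner.exp.fun_mul (hasDerivAt_physHermite n t)).congr_deriv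
    (by rw [physHermite_succ]; ring)

theorem integral_exp_mul_physHermite_succ (n : ℕ) (a b : ℝ) :
    ∫ t in a..b, Real.exp (-t ^ 2 / 2) * physHermite (n + 1) t
      = 2 * n * (∫ t in a..b, Real.exp (-t ^ 2 / 2) * physHermite (n - 1) t)
        - 2 * (Real.exp (-b ^ 2 / 2) * physHermite n b
          - Real.exp (-a ^ 2 / 2) * physHermite n a) := by
  have hftc := intervalIntegral.integral_eq_sub_of_hasDerivAt
    (fun t _ => hasDerivAt_exp_mul_physHermite n t)
    ((by fun_prop : Continuous fun t => Real.exp (-t ^ 2 / 2)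
      * (n * physHermite (n - 1) t - physHermite (n + 1) t / 2)).intervalIntegrable a b)
  rw [← hftc, ← intervalIntegral.integral_const_mul, ← intervalIntegral.integral_const_mul,
    ← intervalIntegral.integral_sub]
  · exact intervalIntegral.integral_congr fun t _ => by ring
  all_goals exact (by fun_prop : Continuous _).intervalIntegrable a b

section Recurrence

open Finset
open scoped Nat

theorem ite_even_two_pow_mul_doubleFactorial_add_two {R : Type*} [CommSemiring R] (m : ℕ) :
    (if Even (m + 3) then (2 : R) ^ ((m + 3) / 2) * ((m + 2)‼ : R) else 0)
      = 2 * (m + 2) * (if Even (m + 1) then (2 : R) ^ ((m + 1) / 2) * (m‼ : R) else 0) := by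
  have hparity : Even (m + 3) ↔ Even (m + 1) := by simp [Nat.even_add, parity_simps]
  split_ifs with h3 h1 h1
  · rw [show (m + 3) / 2 = (m + 1) / 2 + 1 by omega, pow_succ, Nat.doubleFactorial_add_two]
    push_cast
    ring
  · exact absurd (hparity.mp h3) h1
  · exact absurd (hparity.mpr h1) h3
  · simp

variable {K : Type*} [Field K] [CharZero K]

theorem sum_doubleFactorial_ratio_add_two (G : ℕ → K) (m : ℕ) :
    ∑ i ∈ range ((m + 2) / 2 + 1),
        2 ^ i * ((m + 2)‼ : K) / ((m + 2 - 2 * i)‼ : K) * G (m + 2 - 2 * i)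
      = 2 * (m + 2) * ∑ i ∈ range (m / 2 + 1),
          2 ^ i * (m‼ : K) / ((m - 2 * i)‼ : K) * G (m - 2 * i)
        + G (m + 2) := by
  have hdf : ((m + 2)‼ : K) = (m + 2) * m‼ := by
    rw [Nat.doubleFactorial_add_two]; push_cast; ring
  have hne : ((m + 2)‼ : K) ≠ 0 := by exact_mod_cast (Nat.doubleFactorial_pos _).ne'
  rw [show (m + 2) / 2 + 1 = m / 2 + 1 + 1 by omega, sum_range_succ', mul_sum]
  congr 1
  · refine sum_congr rfl fun i _ => ?_
    rw [show m + 2 - 2 * (i + 1) = m - 2 * i by omega, hdf]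
    ring
  · rw [mul_zero, Nat.sub_zero, pow_zero, one_mul, div_self hne, one_mul]

-- At `m = 0` the hypothesis reads `I 1 = -2 * G 0`: the junk `I (0 - 1)` is multiplied by `0`.
theorem eq_sum_doubleFactorial_of_recurrence (I G : ℕ → K)
    (hI : ∀ m, I (m + 1) = 2 * m * I (m - 1) - 2 * G m) (m : ℕ) :
    I (m + 1) = -2 * ∑ i ∈ range (m / 2 + 1),
        2 ^ i * (m‼ : K) / ((m - 2 * i)‼ : K) * G (m - 2 * i)
      + (if Even (m + 1) then (2 : K) ^ ((m + 1) / 2) * (m‼ : K) else 0) * I 0 := by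
  induction m using Nat.twoStepInduction with
  | zero => simp [hI 0]
  | one => rw [hI 1]; norm_num; ring
  | more m ih _ =>
    rw [hI, show m + 2 - 1 = m + 1 from rfl, show m + 2 + 1 = m + 3 from rfl, ih,
      sum_doubleFactorial_ratio_add_two, ite_even_two_pow_mul_doubleFactorial_add_two]
    push_cast
    ring

end Recurrence

theorem integral_exp_hermite_antideriv_general (n : ℕ) (hn : 1 ≤ n) (a x : ℝ) :
    ∫ t in a..x, Real.exp (-t^2/2) * physHermite n t =
      -2 * ∑ i ∈ Finset.range ((n-1)/2 + 1),
        (2^i * (Nat.doubleFactorial (n-1) : ℝ) / (Nat.doubleFactorial (n-1-2*i) : ℝ)) *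
          (Real.exp (-x^2/2) * physHermite (n-1-2*i) x
            - Real.exp (-a^2/2) * physHermite (n-1-2*i) a)
      + (if Even n then (2:ℝ)^(n/2) * (Nat.doubleFactorial (n-1) : ℝ) else 0) *
          ∫ t in a..x, Real.exp (-t^2/2) := by
  obtain ⟨m, rfl⟩ := Nat.exists_eq_add_of_le' hn
  simpa only [Nat.add_sub_cancel, physHermite_zero, mul_one] using
    eq_sum_doubleFactorial_of_recurrence
      (fun k => ∫ t in a..x, Real.exp (-t ^ 2 / 2) * physHermite k t)
      (fun k => Real.exp (-x ^ 2 / 2) * physHermite k x - Real.exp (-a ^ 2 / 2) * physHermite k a)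
      (fun k => integral_exp_mul_physHermite_succ k a x) m

theorem integral_exp_hermite_antideriv (n : ℕ) (hn : 1 ≤ n) (a x : ℝ) (hax : a ≤ x) :
    ∫ t in a..x, Real.exp (-t^2/2) * physHermite n t =
      -2 * ∑ i ∈ Finset.range ((n-1)/2 + 1),
        (2^i * (Nat.doubleFactorial (n-1) : ℝ) / (Nat.doubleFactorial (n-1-2*i) : ℝ)) *
          (Real.exp (-x^2/2) * physHermite (n-1-2*i) x
            - Real.exp (-a^2/2) * physHermite (n-1-2*i) a)
      + (if Even n then (2:ℝ)^(n/2) * (Nat.doubleFactorial (n-1) : ℝ) else 0) *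
          ∫ t in a..x, Real.exp (-t^2/2) :=
  integral_exp_hermite_antideriv_general n hn a x
end

section
/- Let p_u(x) = ∑_{k=0}^{n−1} φ_k(x)², τ_n(x) = √(n/2) φ_{n−1}(x)·(1/2)∫_ℝ sign(x−t) φ_n(t) dt, α_n(x) = 𝟙{n odd}·φ_{n−1}(x)/∫_ℝ φ_{n−1}(t)dt, and p_o = p_u + τ_n + α_n (the GOE mean density at σ² = 1/2). Then 2 p_o''' + 2(2n − 1 − x²) p_o' − 4x p_o = −3 p_u' − 6x p_u on ℝ. -/
open Real MeasureTheory

/-!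
Write `f = φ_{n-1}`, `g = φ_n`, `s = √(2n)` and `J x = ½ ∫ sign(x - t) g t dt`. The ladder
relations `f' = x f - s g`, `g' = s f - x g` together with `J' = g` make every derivative of `p_o`
a polynomial in `x, f, g, J`, and Christoffel–Darboux gives `p_u = n (f² + g²) - s x f g`, while
`τ_n = (s/2) f J`. The operator `L p = 2 p''' + 2 (2n - 1 - x²) p' - 4 x p` annihilates `f`, which
solves `f'' = (x² + 1 - s²) f`; hence `α_n` contributes nothing and `J` drops out of `L (f J)`.
What is left is a polynomial identity in `x, f, g` that holds for every `s`.
-/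

structure HasThirdDerivs (p p₁ p₂ p₃ : ℝ → ℝ) : Prop where
  first : ∀ x, HasDerivAt p (p₁ x) x
  second : ∀ x, HasDerivAt p₁ (p₂ x) x
  third : ∀ x, HasDerivAt p₂ (p₃ x) x

namespace HasThirdDerivs

variable {p p₁ p₂ p₃ q q₁ q₂ q₃ : ℝ → ℝ}

theorem deriv_eq (h : HasThirdDerivs p p₁ p₂ p₃) : deriv p = p₁ :=
  funext fun x => (h.first x).deriv

theorem iteratedDeriv_three_eq (h : HasThirdDerivs p p₁ p₂ p₃) :
    iteratedDeriv 3 p = p₃ := by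
  rw [iteratedDeriv_succ, iteratedDeriv_succ, iteratedDeriv_one, h.deriv_eq,
    funext fun x => (h.second x).deriv, funext fun x => (h.third x).deriv]

theorem id : HasThirdDerivs (fun x => x) (fun _ => 1) (fun _ => 0) (fun _ => 0) :=
  ⟨hasDerivAt_id', fun _ => hasDerivAt_const _ _, fun _ => hasDerivAt_const _ _⟩

theorem const_mul (h : HasThirdDerivs p p₁ p₂ p₃) (c : ℝ) :
    HasThirdDerivs (fun x => c * p x) (fun x => c * p₁ x) (fun x => c * p₂ x)
      (fun x => c * p₃ x) :=
  ⟨fun x => (h.first x).const_mul c, fun x => (h.second x).const_mul c,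
    fun x => (h.third x).const_mul c⟩

theorem add (hp : HasThirdDerivs p p₁ p₂ p₃) (hq : HasThirdDerivs q q₁ q₂ q₃) :
    HasThirdDerivs (fun x => p x + q x) (fun x => p₁ x + q₁ x) (fun x => p₂ x + q₂ x)
      (fun x => p₃ x + q₃ x) :=
  ⟨fun x => (hp.first x).add (hq.first x), fun x => (hp.second x).add (hq.second x),
    fun x => (hp.third x).add (hq.third x)⟩

theorem sub (hp : HasThirdDerivs p p₁ p₂ p₃) (hq : HasThirdDerivs q q₁ q₂ q₃) :
    HasThirdDerivs (fun x => p x - q x) (fun x => p₁ x - q₁ x) (fun x => p₂ x - q₂ x)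
      (fun x => p₃ x - q₃ x) :=
  ⟨fun x => (hp.first x).sub (hq.first x), fun x => (hp.second x).sub (hq.second x),
    fun x => (hp.third x).sub (hq.third x)⟩

theorem mul (hp : HasThirdDerivs p p₁ p₂ p₃) (hq : HasThirdDerivs q q₁ q₂ q₃) :
    HasThirdDerivs (fun x => p x * q x) (fun x => p₁ x * q x + p x * q₁ x)
      (fun x => p₂ x * q x + 2 * (p₁ x * q₁ x) + p x * q₂ x)
      (fun x => p₃ x * q x + 3 * (p₂ x * q₁ x) + 3 * (p₁ x * q₂ x) + p x * q₃ x) :=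
  ⟨fun x => (hp.first x).fun_mul (hq.first x),
    fun x => (((hp.second x).fun_mul (hq.first x)).fun_add
      ((hp.first x).fun_mul (hq.second x))).congr_deriv (by ring),
    fun x => ((((hp.third x).fun_mul (hq.first x)).fun_add
      (((hp.second x).fun_mul (hq.second x)).const_mul 2)).fun_add
      ((hp.first x).fun_mul (hq.third x))).congr_deriv (by ring)⟩

end HasThirdDerivs

structure IsLadderPair (s : ℝ) (f g : ℝ → ℝ) : Prop where
  hasDerivAt_fst : ∀ x, HasDerivAt f (x * f x - s * g x) x
  hasDerivAt_snd : ∀ x, HasDerivAt g (s * f x - x * g x) x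

namespace IsLadderPair

variable {s : ℝ} {f g : ℝ → ℝ}

theorem hasThirdDerivs_fst (h : IsLadderPair s f g) :
    HasThirdDerivs f (fun x => x * f x - s * g x) (fun x => (x ^ 2 + 1 - s ^ 2) * f x)
      (fun x => 2 * x * f x + (x ^ 2 + 1 - s ^ 2) * (x * f x - s * g x)) :=
  ⟨h.hasDerivAt_fst,
    fun x => (((hasDerivAt_id' x).fun_mul (h.hasDerivAt_fst x)).fun_sub
      ((h.hasDerivAt_snd x).const_mul s)).congr_deriv (by ring),
    fun x => ((((hasDerivAt_pow 2 x).add_const 1).sub_const (s ^ 2)).fun_mul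
      (h.hasDerivAt_fst x)).congr_deriv (by ring)⟩

theorem hasThirdDerivs_snd (h : IsLadderPair s f g) :
    HasThirdDerivs g (fun x => s * f x - x * g x) (fun x => (x ^ 2 - 1 - s ^ 2) * g x)
      (fun x => 2 * x * g x + (x ^ 2 - 1 - s ^ 2) * (s * f x - x * g x)) :=
  ⟨h.hasDerivAt_snd,
    fun x => (((h.hasDerivAt_fst x).const_mul s).fun_sub
      ((hasDerivAt_id' x).fun_mul (h.hasDerivAt_snd x))).congr_deriv (by ring),
    fun x => ((((hasDerivAt_pow 2 x).sub_const 1).sub_const (s ^ 2)).fun_mul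
      (h.hasDerivAt_snd x)).congr_deriv (by ring)⟩

theorem goe_identity (h : IsLadderPair s f g) {J P p : ℝ → ℝ}
    (hJ : ∀ x, HasDerivAt J (g x) x) (a : ℝ)
    (hP : P = fun y => s ^ 2 / 2 * (f y * f y + g y * g y) - s * (y * (f y * g y)))
    (hp : p = fun y => P y + s / 2 * (f y * J y) + a * f y) (x : ℝ) :
    2 * iteratedDeriv 3 p x + 2 * (s ^ 2 - 1 - x ^ 2) * deriv p x - 4 * x * p x =
      -3 * deriv P x - 6 * x * P x := by
  have hF := h.hasThirdDerivs_fst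
  have hG := h.hasThirdDerivs_snd
  have hJ3 : HasThirdDerivs J g _ _ := ⟨hJ, hG.first, hG.second⟩
  have hP3 : HasThirdDerivs P _ _ _ :=
    hP ▸ (((hF.mul hF).add (hG.mul hG)).const_mul (s ^ 2 / 2)).sub
      ((HasThirdDerivs.id.mul (hF.mul hG)).const_mul s)
  have hp3 : HasThirdDerivs p _ _ _ :=
    hp ▸ (hP3.add ((hF.mul hJ3).const_mul (s / 2))).add (hF.const_mul a)
  rw [hp3.iteratedDeriv_three_eq, hp3.deriv_eq, hP3.deriv_eq, hp, hP]
  ring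

end IsLadderPair

section SignIntegral

variable {ψ : ℝ → ℝ}

theorem hasDerivAt_integral_Iic (hψ : Integrable ψ) (hc : Continuous ψ) (x : ℝ) :
    HasDerivAt (fun y => ∫ t in Set.Iic y, ψ t) (ψ x) x := by
  have hsplit : (fun y => ∫ t in Set.Iic y, ψ t)
      = fun y => (∫ t in (0 : ℝ)..y, ψ t) + ∫ t in Set.Iic 0, ψ t := by
    funext y
    rw [← intervalIntegral.integral_Iic_sub_Iic hψ.integrableOn hψ.integrableOn, sub_add_cancel]
  rw [hsplit]
  exact (intervalIntegral.integral_hasDerivAt_right hψ.intervalIntegrable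
    (hc.stronglyMeasurableAtFilter _ _) hc.continuousAt).add_const _

theorem half_integral_sign_sub_mul (hψ : Integrable ψ) (x : ℝ) :
    (1 / 2) * ∫ t, sign (x - t) * ψ t = (∫ t in Set.Iic x, ψ t) - (1 / 2) * ∫ t, ψ t := by
  have hae : (fun t => sign (x - t) * ψ t) =ᵐ[volume]
      fun t => 2 * Set.indicator (Set.Iic x) ψ t - ψ t := by
    filter_upwards [volume.ae_ne x] with t ht
    rcases ht.lt_or_gt with h | h
    · rw [Real.sign_of_pos (by linarith), Set.indicator_of_mem (Set.mem_Iic.2 h.le)]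
      ring
    · rw [Real.sign_of_neg (by linarith), Set.indicator_of_notMem (by simpa using h)]
      ring
  rw [integral_congr_ae hae, integral_sub ((hψ.indicator measurableSet_Iic).const_mul 2) hψ,
    integral_const_mul, integral_indicator measurableSet_Iic]
  ring

theorem hasDerivAt_half_integral_sign_sub_mul (hψ : Integrable ψ) (hc : Continuous ψ) (x : ℝ) :
    HasDerivAt (fun y => (1 / 2) * ∫ t, sign (y - t) * ψ t) (ψ x) x := by
  simp only [half_integral_sign_sub_mul hψ]
  exact (hasDerivAt_integral_Iic hψ hc x).sub_const _

end SignIntegral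

open Polynomial in
theorem integrable_eval_mul_exp_neg_mul_sq {b : ℝ} (hb : 0 < b) (p : ℝ[X]) :
    Integrable fun x => p.eval x * exp (-b * x ^ 2) := by
  induction p using Polynomial.induction_on' with
  | add p q hp hq =>
    simp only [eval_add, add_mul]
    exact hp.add hq
  | monomial k c =>
    have hk : (-1 : ℝ) < k := by linarith [k.cast_nonneg (α := ℝ)]
    simpa [mul_assoc, Real.rpow_natCast] using
      (integrable_rpow_mul_exp_neg_mul_sq hb hk).const_mul c

noncomputable def gaussDeriv (k : ℕ) : ℝ → ℝ := iteratedDeriv k fun y => exp (-y ^ 2)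

theorem gaussDeriv_succ (k : ℕ) : gaussDeriv (k + 1) = deriv (gaussDeriv k) := iteratedDeriv_succ

theorem hasDerivAt_gaussDeriv (k : ℕ) (x : ℝ) :
    HasDerivAt (gaussDeriv k) (gaussDeriv (k + 1) x) x := by
  have hsmooth : ContDiff ℝ ⊤ fun y : ℝ => exp (-y ^ 2) := by fun_prop
  rw [gaussDeriv_succ]
  exact (hsmooth.differentiable_iteratedDeriv k
    (by exact_mod_cast WithTop.coe_lt_top _) x).hasDerivAt

theorem gaussDeriv_one : gaussDeriv 1 = fun x => -2 * x * gaussDeriv 0 x := by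
  rw [gaussDeriv_succ]
  funext x
  simp only [gaussDeriv, iteratedDeriv_zero]
  exact ((hasDerivAt_pow 2 x).fun_neg.exp.congr_deriv (by ring)).deriv

theorem gaussDeriv_add_two (k : ℕ) :
    gaussDeriv (k + 2)
      = fun x => -2 * x * gaussDeriv (k + 1) x - 2 * (k + 1) * gaussDeriv k x := by
  induction k with
  | zero =>
    conv_lhs => rw [gaussDeriv_succ, gaussDeriv_one]
    funext x
    exact ((((hasDerivAt_id' x).const_mul (-2)).fun_mul (hasDerivAt_gaussDeriv 0 x)).congr_deriv
      (by push_cast; ring)).deriv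
  | succ k ih =>
    conv_lhs => rw [gaussDeriv_succ, ih]
    funext x
    exact (((((hasDerivAt_id' x).const_mul (-2)).fun_mul (hasDerivAt_gaussDeriv (k + 1) x)).fun_sub
      ((hasDerivAt_gaussDeriv k x).const_mul _)).congr_deriv (by push_cast; ring)).deriv

open Polynomial in
theorem exists_gaussDeriv_eq_eval_mul (k : ℕ) :
    ∃ p : ℝ[X], gaussDeriv k = fun x => p.eval x * exp (-x ^ 2) := by
  induction k with
  | zero => exact ⟨1, by simp [gaussDeriv]⟩
  | succ k ih =>
    obtain ⟨p, hp⟩ := ih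
    refine ⟨derivative p - 2 * X * p, ?_⟩
    rw [gaussDeriv_succ, hp]
    funext x
    refine (((p.hasDerivAt x).fun_mul (hasDerivAt_pow 2 x).fun_neg.exp).congr_deriv ?_).deriv
    simp only [eval_sub, eval_mul, eval_X, eval_ofNat]
    ring

noncomputable def hermiteFnConst (k : ℕ) : ℝ := (√(2 ^ k * k.factorial * √π))⁻¹

theorem sqrt_mul_hermiteFnConst_succ (k : ℕ) :
    √(2 * (k + 1)) * hermiteFnConst (k + 1) = hermiteFnConst k := by
  have hsplit : (2 : ℝ) ^ (k + 1) * (k + 1).factorial * √π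
      = 2 * (k + 1) * (2 ^ k * k.factorial * √π) := by
    push_cast [Nat.factorial_succ]
    ring
  rw [hermiteFnConst, hermiteFnConst, hsplit,
    Real.sqrt_mul (by positivity : (0 : ℝ) ≤ 2 * (k + 1)), mul_inv,
    ← mul_assoc, mul_inv_cancel₀ (by positivity), one_mul]

theorem hermiteFn_eq (k : ℕ) (x : ℝ) :
    hermiteFn k x = hermiteFnConst k * (-1) ^ k * exp (x ^ 2 / 2) * gaussDeriv k x := by
  have hexp : exp (x ^ 2) * exp (-x ^ 2 / 2) = exp (x ^ 2 / 2) := by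
    rw [← Real.exp_add]
    ring_nf
  simp only [hermiteFn, physHermite, hermiteFnConst, gaussDeriv]
  rw [← hexp]
  ring

theorem hasDerivAt_hermiteFn (k : ℕ) (x : ℝ) :
    HasDerivAt (hermiteFn k) (x * hermiteFn k x - √(2 * (k + 1)) * hermiteFn (k + 1) x) x := by
  have hexp : HasDerivAt (fun y => exp (y ^ 2 / 2)) (exp (x ^ 2 / 2) * x) x :=
    ((hasDerivAt_pow 2 x).div_const 2).exp.congr_deriv (by ring)
  have h := (hexp.fun_mul (hasDerivAt_gaussDeriv k x)).const_mul (hermiteFnConst k * (-1) ^ k)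
  have hfun : hermiteFn k
      = fun y => hermiteFnConst k * (-1) ^ k * (exp (y ^ 2 / 2) * gaussDeriv k y) :=
    funext fun y => by rw [hermiteFn_eq]; ring
  rw [hfun]
  refine h.congr_deriv ?_
  rw [hermiteFn_eq, ← sqrt_mul_hermiteFnConst_succ k]
  ring

theorem hermiteFn_one (x : ℝ) : hermiteFn 1 x = √2 * x * hermiteFn 0 x := by
  have hc := sqrt_mul_hermiteFnConst_succ 0
  have hsq : √2 * √2 = 2 := Real.mul_self_sqrt zero_le_two
  norm_num at hc
  rw [hermiteFn_eq, hermiteFn_eq, gaussDeriv_one, ← hc]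
  linear_combination (-hermiteFnConst 1 * x * exp (x ^ 2 / 2) * gaussDeriv 0 x) * hsq

theorem hermiteFn_add_two (k : ℕ) (x : ℝ) :
    √(2 * (k + 2)) * hermiteFn (k + 2) x
      = 2 * x * hermiteFn (k + 1) x - √(2 * (k + 1)) * hermiteFn k x := by
  have h₂ : √(2 * (k + 2)) * hermiteFnConst (k + 2) = hermiteFnConst (k + 1) := by
    convert sqrt_mul_hermiteFnConst_succ (k + 1) using 4
    push_cast
    ring
  have h₁ := sqrt_mul_hermiteFnConst_succ k
  have hsq : √(2 * (k + 1)) * √(2 * (k + 1)) = 2 * ((k : ℝ) + 1) :=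
    Real.mul_self_sqrt (by positivity)
  rw [hermiteFn_eq, hermiteFn_eq, hermiteFn_eq, gaussDeriv_add_two]
  linear_combination (-1) ^ k * exp (x ^ 2 / 2) *
    ((-2 * x * gaussDeriv (k + 1) x - 2 * (k + 1) * gaussDeriv k x) * h₂
      - √(2 * (k + 1)) * gaussDeriv k x * h₁ + hermiteFnConst (k + 1) * gaussDeriv k x * hsq)

theorem hasDerivAt_hermiteFn_succ (k : ℕ) (x : ℝ) :
    HasDerivAt (hermiteFn (k + 1))
      (√(2 * (k + 1)) * hermiteFn k x - x * hermiteFn (k + 1) x) x := by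
  refine (hasDerivAt_hermiteFn (k + 1) x).congr_deriv ?_
  rw [show ((k + 1 : ℕ) : ℝ) + 1 = k + 2 by push_cast; ring]
  linear_combination -hermiteFn_add_two k x

theorem isLadderPair_hermiteFn (k : ℕ) :
    IsLadderPair √(2 * (k + 1)) (hermiteFn k) (hermiteFn (k + 1)) :=
  ⟨hasDerivAt_hermiteFn k, hasDerivAt_hermiteFn_succ k⟩

theorem pGUE_succ (m : ℕ) (x : ℝ) :
    pGUE (m + 1) x = (m + 1) * (hermiteFn m x ^ 2 + hermiteFn (m + 1) x ^ 2)
      - √(2 * (m + 1)) * x * hermiteFn m x * hermiteFn (m + 1) x := by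
  induction m with
  | zero =>
    simp only [pGUE, Finset.sum_range_one, CharP.cast_eq_zero, zero_add, mul_one, hermiteFn_one]
    ring
  | succ m ih =>
    have hsq : √(2 * (m + 1)) * √(2 * (m + 1)) = 2 * ((m : ℝ) + 1) :=
      Real.mul_self_sqrt (by positivity)
    have hsq' : √(2 * (m + 2)) * √(2 * (m + 2)) = 2 * ((m : ℝ) + 2) :=
      Real.mul_self_sqrt (by positivity)
    rw [pGUE, Finset.sum_range_succ, ← pGUE, ih]
    push_cast
    rw [show (m : ℝ) + 1 + 1 = m + 2 by ring]
    linear_combination (√(2 * (m + 1)) / 2 * hermiteFn m x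
      - √(2 * (m + 2)) / 2 * hermiteFn (m + 2) x) * hermiteFn_add_two m x
      + hermiteFn (m + 2) x ^ 2 / 2 * hsq' - hermiteFn m x ^ 2 / 2 * hsq

theorem integrable_hermiteFn (k : ℕ) : Integrable (hermiteFn k) := by
  obtain ⟨p, hp⟩ := exists_gaussDeriv_eq_eval_mul k
  have hfun : hermiteFn k
      = fun x => hermiteFnConst k * (-1) ^ k * (p.eval x * exp (-(1 / 2) * x ^ 2)) := by
    funext x
    have hexp : exp (x ^ 2 / 2) * exp (-x ^ 2) = exp (-(1 / 2) * x ^ 2) := by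
      rw [← Real.exp_add]
      ring_nf
    rw [hermiteFn_eq, hp, ← hexp]
    ring
  rw [hfun]
  exact (integrable_eval_mul_exp_neg_mul_sq (by norm_num) p).const_mul _

theorem continuous_hermiteFn (k : ℕ) : Continuous (hermiteFn k) :=
  continuous_iff_continuousAt.2 fun x => (hasDerivAt_hermiteFn k x).continuousAt

theorem goe_density_ode (n : ℕ) (hn : 1 ≤ n) (po : ℝ → ℝ)
    (hpo : po = fun y => pGUE n y + tauFn n y + (if Odd n then alphaFn n y else 0)) (x : ℝ) :
    2 * iteratedDeriv 3 po x + 2*(2*n - 1 - x^2) * deriv po x - 4*x * po x =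
      -3 * deriv (pGUE n) x - 6*x * pGUE n x := by
  obtain ⟨m, rfl⟩ := Nat.exists_eq_add_of_le' hn
  have hs : √(2 * ((m : ℝ) + 1)) ^ 2 = 2 * (m + 1) := Real.sq_sqrt (by positivity)
  have hhalf : √(((m + 1 : ℕ) : ℝ) / 2) = √(2 * ((m : ℝ) + 1)) / 2 := by
    rw [show ((m + 1 : ℕ) : ℝ) / 2 = 2 * ((m : ℝ) + 1) / 2 ^ 2 by push_cast; ring,
      Real.sqrt_div' _ (by positivity), Real.sqrt_sq (by norm_num)]
  rw [show 2 * ((m + 1 : ℕ) : ℝ) - 1 = √(2 * ((m : ℝ) + 1)) ^ 2 - 1 by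
    rw [hs]; push_cast; ring]
  refine (isLadderPair_hermiteFn m).goe_identity
    (hasDerivAt_half_integral_sign_sub_mul (integrable_hermiteFn (m + 1)) (continuous_hermiteFn _))
    (if Odd (m + 1) then (∫ t, hermiteFn m t)⁻¹ else 0)
    (funext fun y => by rw [pGUE_succ, hs]; ring) ?_ x
  rw [hpo]
  funext y
  simp only [tauFn, alphaFn, hhalf, Nat.add_sub_cancel]
  split_ifs <;> ring
end
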